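/- For 1≤i≤r let A_i=⋂_{g∈G}⋃_{k≥0}⋂_{l≥k}σ^g(Z_{i,l}), where Z_{i,k}=⋃_{v∈D_{i+kr}}σ^{v⁻¹}C_{i+kr,i}. Then the factor map π:X→←G from X onto its associated G-odometer is injective when restricted to A_i. -/

import Mathlib

open Pointwise MeasureTheory Filter Topology

/-- The (left) shift action of `G` on `G → A`: `(σ^g x)(h) = x(g⁻¹ h)`. -/
def shift {G A : Type*} [Group G] (g : G) (x : G → A) : G → A := fun h => x (g⁻¹ * h)

/-- `Per(x, Γ, α) = {g ∈ G : x(γ g) = α for all γ ∈ Γ}`. -/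
def Per {G A : Type*} [Group G] (x : G → A) (Γ : Subgroup G) (α : A) : Set G :=
  {g : G | ∀ γ ∈ Γ, x (γ * g) = α}

/-- `Per(x, Γ) = ⋃_α Per(x, Γ, α)`. -/
def PerAll {G A : Type*} [Group G] (x : G → A) (Γ : Subgroup G) : Set G :=
  ⋃ α : A, Per x Γ α

/-- `x` is a Toeplitz array if every `g ∈ G` is periodic for some finite index subgroup. -/
def IsToeplitz {G A : Type*} [Group G] (x : G → A) : Prop :=
  ∀ g : G, ∃ Γ : Subgroup G, Γ.FiniteIndex ∧ g ∈ PerAll x Γ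

/-- `D` is a fundamental domain of `G / Γ`: every `g ∈ G` can be written uniquely as
`g = γ u` with `γ ∈ Γ` and `u ∈ D`. -/
def IsFundDomain {G : Type*} [Group G] (Γ : Subgroup G) (D : Finset G) : Prop :=
  ∀ g : G, ∃! p : G × G, p.1 ∈ Γ ∧ p.2 ∈ D ∧ g = p.1 * p.2

/-- The symbol `α_{m+1} ∈ Σ = {1, …, r}` of the construction: the symbol `j ∈ {1, …, r}` with
`j ≡ m+1 (mod r)`, rendered in `Fin r` (the symbol `i ∈ {1, …, r}` corresponds to `i-1`). -/
def sym {r : ℕ} (hr : 1 < r) (m : ℕ) : Fin r := ⟨m % r, Nat.mod_lt m (by omega)⟩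

/-- The `G`-odometer associated to a nested decreasing sequence `(Γ n)` of subgroups of `G`:
the inverse limit of the canonical projections `G ⧸ Γ (n+1) → G ⧸ Γ n`, realized as the set of
compatible sequences in `Π n, G ⧸ Γ n`. -/
def GOdometer {G : Type*} [Group G] (Γ : ℕ → Subgroup G) : Set (Π n, G ⧸ Γ n) :=
  {y | ∀ (n : ℕ) (g : G), y (n + 1) = (g : G ⧸ Γ (n + 1)) → y n = (g : G ⧸ Γ n)}

/-!
Let `x, y ∈ A_i` with `π x = π y` and fix `g ∈ G`. For all large `l` both `x` and `y` lie in
`σ^g Z_{i,l}`, so with `n = i + l r` they are `σ^{g v⁻¹} c` and `σ^{g w⁻¹} c'` for some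
`c, c' ∈ C_{n,i}` and `v, w ∈ D_n`. The `n`-th coordinate of `π` gives `v w⁻¹ ∈ Γ_n`, hence
`v = w`, and then `x(g) = c(v)`, `y(g) = c'(v)`. These agree: either `v ∈ J(n)`, where both
equal `i`, or `v ∈ J(m) Γ_{m+1}` for some `m < n`, a coset on which `η`, and with it every
element of `C_n`, is `Γ_n`-periodic with one and the same symbol.
-/

section Shift

variable {G A : Type*} [Group G]

lemma shift_shift (a b : G) (x : G → A) :
    shift a (shift b x) = shift (a * b) x := by
  funext h
  simp [shift, mul_inv_rev, mul_assoc]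

lemma shift_shift_inv_apply (g v : G) (x : G → A) :
    shift g (shift v⁻¹ x) g = x v := by
  simp [shift]

lemma continuous_shift [TopologicalSpace A] (g : G) :
    Continuous (shift g : (G → A) → G → A) :=
  continuous_pi fun _ => continuous_apply _

lemma shift_mem_closure_orbit [TopologicalSpace A] {η x : G → A}
    (g : G) (hx : x ∈ closure {y | ∃ h : G, y = shift h η}) :
    shift g x ∈ closure {y | ∃ h : G, y = shift h η} := by
  refine Set.MapsTo.closure (fun y hy => ?_) (continuous_shift g) hx
  obtain ⟨h, rfl⟩ := hy
  exact ⟨g * h, shift_shift g h η⟩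

end Shift

lemma IsFundDomain.eq_of_mul_inv_mem {G : Type*} [Group G] {Γ : Subgroup G} {D : Finset G}
    (hD : IsFundDomain Γ D) {v w : G} (hv : v ∈ D) (hw : w ∈ D) (hvw : v * w⁻¹ ∈ Γ) :
    v = w := by
  obtain ⟨p, -, huniq⟩ := hD v
  have h₁ := huniq (v * w⁻¹, w) ⟨hvw, hw, by group⟩
  have h₂ := huniq (1, v) ⟨Γ.one_mem, hv, by group⟩
  exact (congrArg Prod.snd (h₁.trans h₂.symm)).symm

lemma IsFundDomain.eq_of_coe_mul_inv_eq {G : Type*} [Group G] {Γ : Subgroup G}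
    {D : Finset G} (hD : IsFundDomain Γ D) {g v w : G} (hv : v ∈ D) (hw : w ∈ D)
    (h : ((g * v⁻¹ : G) : G ⧸ Γ) = (g * w⁻¹ : G)) : v = w := by
  refine hD.eq_of_mul_inv_mem hv hw ?_
  simpa [mul_assoc] using QuotientGroup.eq.1 h

section Periodic

variable {G A : Type*} [Group G]

lemma apply_eq_of_mem_Per {x : G → A} {Γ : Subgroup G} {a : A} {w : G}
    (hw : w ∈ Per x Γ a) : x w = a := by
  simpa using hw 1 Γ.one_mem

lemma apply_eq_apply_of_Per_eq_Per {x y η : G → A} {Γ : Subgroup G}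
    (hx : ∀ a, Per x Γ a = Per η Γ a) (hy : ∀ a, Per y Γ a = Per η Γ a) {w : G}
    (hw : w ∈ PerAll η Γ) : x w = y w := by
  obtain ⟨a, ha⟩ := Set.mem_iUnion.1 hw
  have hxa : w ∈ Per x Γ a := (hx a).symm ▸ ha
  have hya : w ∈ Per y Γ a := (hy a).symm ▸ ha
  rw [apply_eq_of_mem_Per hxa, apply_eq_of_mem_Per hya]

lemma mul_mem_Per {η : G → A} {Γ Λ : Subgroup G} [hΛ : Λ.Normal]
    (hle : Γ ≤ Λ) {h : G} {a : A} (hη : ∀ g ∈ Λ, η (h * g) = a) {γ : G} (hγ : γ ∈ Λ) :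
    h * γ ∈ Per η Γ a := by
  intro γ' hγ'
  rw [show γ' * (h * γ) = h * (h⁻¹ * γ' * h * γ) by group]
  exact hη _ (Λ.mul_mem (hΛ.conj_mem' γ' (hle hγ') h) hγ)

lemma mem_PerAll_of_mem_D_of_notMem_J {Γ : ℕ → Subgroup G}
    (hanti : Antitone Γ) (hnormal : ∀ n, (Γ n).Normal) {D : ℕ → Finset G} {J : ℕ → Set G}
    {η : G → A} {s : ℕ → A} (hη : ∀ m, ∀ h ∈ J m, ∀ g ∈ Γ (m + 1), η (h * g) = s m) {n : ℕ}
    (hJ : J n = (D n : Set G) \ ⋃ m < n, J m * ((Γ (m + 1) : Subgroup G) : Set G))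
    {w : G} (hw : w ∈ D n) (hwJ : w ∉ J n) : w ∈ PerAll η (Γ n) := by
  have hw' : w ∈ ⋃ m < n, J m * ((Γ (m + 1) : Subgroup G) : Set G) := by
    by_contra hcon
    exact hwJ (hJ ▸ ⟨hw, hcon⟩)
  obtain ⟨m, hm, hmem⟩ := Set.mem_iUnion₂.1 hw'
  obtain ⟨h, hh, γ, hγ, rfl⟩ := Set.mem_mul.1 hmem
  exact Set.mem_iUnion.2 ⟨s m, mul_mem_Per (hanti (by omega)) (hη m h hh) hγ⟩

end Periodic

lemma eventually_mem_of_mem_iUnion_iInter {α : Type*} {s : ℕ → Set α} {x : α}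
    (hx : x ∈ ⋃ k, ⋂ l, ⋂ (_ : k ≤ l), s l) : ∀ᶠ l in atTop, x ∈ s l := by
  rwa [← mem_liminf_iff_eventually_mem, liminf_eq_iSup_iInf_of_nat]

theorem statement18_general {G : Type*} [Group G]
    {r : ℕ} (hr : 1 < r)
    -- the sequence of subgroups (with the convention `Γ 0 = G`, the data of the paper being
    -- `Γ 1 > Γ 2 > ⋯`)
    (Γ : ℕ → Subgroup G) (hanti : StrictAnti Γ)
    (hnormal : ∀ n, (Γ n).Normal)
    -- the fundamental domains
    (D : ℕ → Finset G) (hfund : ∀ n, IsFundDomain (Γ n) (D n))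
    -- the sets `J m`
    (J : ℕ → Set G)
    (hJ : ∀ m, 1 ≤ m → J m = (D m : Set G) \ ⋃ i < m, J i * ((Γ (i + 1) : Subgroup G) : Set G))
    -- the Toeplitz array `η`
    (η : G → Fin r)
    (hηdef : ∀ (m : ℕ), ∀ h ∈ J m, ∀ g ∈ Γ (m + 1), η (h * g) = sym hr m)
    -- `X` is the orbit closure of `η`
    (X : Set (G → Fin r)) (hX : X = closure {y | ∃ g : G, y = shift g η})
    -- the sets `C n` and `C_{n,i}`
    (C : ℕ → Set (G → Fin r))
    (hC : ∀ n, C n = {x | x ∈ X ∧ ∀ a : Fin r, Per x (Γ n) a = Per η (Γ n) a})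
    (Ci : ℕ → Fin r → Set (G → Fin r))
    (hCi : ∀ n (i : Fin r), Ci n i = {x | x ∈ C n ∧ ∀ g ∈ J n, x g = i})
    -- `π` is the almost 1-1 factor map from `X` onto the odometer:
    -- `π(x) = (g_n Γ_n)_n` where `x ∈ σ^{g_n} C_n`
    (π : (G → Fin r) → Π n, G ⧸ Γ n)
    (hπ : ∀ x ∈ X, ∀ (n : ℕ) (g : G), x ∈ shift g '' C n → π x n = (g : G ⧸ Γ n))
    -- the sets `Z_{i,k} = ⋃_{v ∈ D_{i+kr}} σ^{v⁻¹} C_{i+kr, i}` (the symbol `i ∈ {1,…,r}`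
    -- corresponding to `i : Fin r` is `(i : ℕ) + 1`)
    (Z : Fin r → ℕ → Set (G → Fin r))
    (hZ : ∀ (i : Fin r) (k : ℕ),
      Z i k = ⋃ v ∈ D ((i : ℕ) + 1 + k * r), shift v⁻¹ '' Ci ((i : ℕ) + 1 + k * r) i)
    -- the sets `A_i = ⋂_{g ∈ G} ⋃_{k ≥ 0} ⋂_{l ≥ k} σ^g (Z_{i,l})`
    (A : Fin r → Set (G → Fin r))
    (hA : ∀ i : Fin r, A i = ⋂ g : G, ⋃ k : ℕ, ⋂ l, ⋂ (_ : k ≤ l), shift g '' Z i l) :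
    -- `π` is injective on `A i`
    ∀ i : Fin r, Set.InjOn π (A i) := by
  intro i x hx y hy hπxy
  funext g
  rw [hA] at hx hy
  obtain ⟨l, hxl, hyl⟩ := ((eventually_mem_of_mem_iUnion_iInter (Set.mem_iInter.1 hx g)).and
    (eventually_mem_of_mem_iUnion_iInter (Set.mem_iInter.1 hy g))).exists
  set n := (i : ℕ) + 1 + l * r
  obtain ⟨_, hz, rfl⟩ := hxl
  obtain ⟨_, hz', rfl⟩ := hyl
  rw [hZ] at hz hz'
  simp only [Set.mem_iUnion, Set.mem_image] at hz hz'
  obtain ⟨v, hv, c, hc, rfl⟩ := hz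
  obtain ⟨w, hw, c', hc', rfl⟩ := hz'
  rw [hCi] at hc hc'
  obtain ⟨hcC, hcJ⟩ := hc
  obtain ⟨hc'C, hc'J⟩ := hc'
  have hcoe : ∀ (u : G) (d : G → Fin r), d ∈ C n →
      π (shift g (shift u⁻¹ d)) n = ((g * u⁻¹ : G) : G ⧸ Γ n) := fun u d hd =>
    hπ _ (hX ▸ shift_mem_closure_orbit g (shift_mem_closure_orbit u⁻¹ (hX ▸ (hC n ▸ hd).1)))
      n _ ⟨d, hd, (shift_shift g u⁻¹ d).symm⟩
  have hvw : v = w := (hfund n).eq_of_coe_mul_inv_eq hv hw <| by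
    rw [← hcoe v c hcC, ← hcoe w c' hc'C, hπxy]
  subst hvw
  rw [shift_shift_inv_apply, shift_shift_inv_apply]
  by_cases hvJ : v ∈ J n
  · rw [hcJ v hvJ, hc'J v hvJ]
  · exact apply_eq_apply_of_Per_eq_Per (hC n ▸ hcC).2 (hC n ▸ hc'C).2
      (mem_PerAll_of_mem_D_of_notMem_J hanti.antitone hnormal hηdef (hJ n (by omega)) hv hvJ)

theorem statement18 {G : Type*} [Group G] [Countable G]
    {r : ℕ} (hr : 1 < r)
    -- the sequence of subgroups (with the convention `Γ 0 = G`, the data of the paper being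
    -- `Γ 1 > Γ 2 > ⋯`)
    (Γ : ℕ → Subgroup G) (hΓ0 : Γ 0 = ⊤) (hanti : StrictAnti Γ)
    (hnormal : ∀ n, (Γ n).Normal) (hfi : ∀ n, (Γ n).FiniteIndex)
    (hint : (⨅ n, Γ n) = ⊥) (hidx : ∀ n, 3 ≤ (Γ (n + 1)).relIndex (Γ n))
    -- the fundamental domains
    (D : ℕ → Finset G) (hD0 : D 0 = {1}) (hfund : ∀ n, IsFundDomain (Γ n) (D n))
    (hone : ∀ n, (1 : G) ∈ D n) (hDmono : ∀ n, D n ⊆ D (n + 1))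
    (hcoverD : ∀ g : G, ∃ n, g ∈ D n)
    (hdecomp : ∀ i j, i < j →
      (D j : Set G) = ⋃ v ∈ (D j : Set G) ∩ (Γ i : Set G), v • (D i : Set G))
    -- the sets `J m`
    (J : ℕ → Set G) (hJ0 : J 0 = {1})
    (hJ : ∀ m, 1 ≤ m → J m = (D m : Set G) \ ⋃ i < m, J i * ((Γ (i + 1) : Subgroup G) : Set G))
    -- the Toeplitz array `η`
    (η : G → Fin r)
    (hηdef : ∀ (m : ℕ), ∀ h ∈ J m, ∀ g ∈ Γ (m + 1), η (h * g) = sym hr m)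
    -- `X` is the orbit closure of `η`
    (X : Set (G → Fin r)) (hX : X = closure {y | ∃ g : G, y = shift g η})
    -- the sets `C n` and `C_{n,i}`
    (C : ℕ → Set (G → Fin r))
    (hC : ∀ n, C n = {x | x ∈ X ∧ ∀ a : Fin r, Per x (Γ n) a = Per η (Γ n) a})
    (Ci : ℕ → Fin r → Set (G → Fin r))
    (hCi : ∀ n (i : Fin r), Ci n i = {x | x ∈ C n ∧ ∀ g ∈ J n, x g = i})
    -- `π` is the almost 1-1 factor map from `X` onto the odometer:
    -- `π(x) = (g_n Γ_n)_n` where `x ∈ σ^{g_n} C_n`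
    (π : (G → Fin r) → Π n, G ⧸ Γ n)
    (hπ : ∀ x ∈ X, ∀ (n : ℕ) (g : G), x ∈ shift g '' C n → π x n = (g : G ⧸ Γ n))
    (hπonto : π '' X = GOdometer Γ)
    -- the sets `Z_{i,k} = ⋃_{v ∈ D_{i+kr}} σ^{v⁻¹} C_{i+kr, i}` (the symbol `i ∈ {1,…,r}`
    -- corresponding to `i : Fin r` is `(i : ℕ) + 1`)
    (Z : Fin r → ℕ → Set (G → Fin r))
    (hZ : ∀ (i : Fin r) (k : ℕ),
      Z i k = ⋃ v ∈ D ((i : ℕ) + 1 + k * r), shift v⁻¹ '' Ci ((i : ℕ) + 1 + k * r) i)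
    -- the sets `A_i = ⋂_{g ∈ G} ⋃_{k ≥ 0} ⋂_{l ≥ k} σ^g (Z_{i,l})`
    (A : Fin r → Set (G → Fin r))
    (hA : ∀ i : Fin r, A i = ⋂ g : G, ⋃ k : ℕ, ⋂ l, ⋂ (_ : k ≤ l), shift g '' Z i l) :
    -- `π` is injective on `A i`
    ∀ i : Fin r, Set.InjOn π (A i) :=
  statement18_general hr Γ hanti hnormal D hfund J hJ η hηdef X hX C hC Ci hCi π hπ Z hZ A hA
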